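/- arXiv:1306.3776 — 6 statements merged into one kernel-verified Lean document; each statement's English description precedes it below -/
import Mathlib

section
/- Let α, β : ℕ → ℝ with α 0 = 1, αₙ² + βₙ² = 1 for all n, and let a, b be the diagonal operators on ℓ²(ℕ) with a eₙ = αₙ eₙ, b eₙ = βₙ eₙ, and let s be the unilateral right shift. Then the operator u on ℓ²(ℕ) ⊗ ℂ² given in block form by u = [[s* a s, i s* b],[i b s, a]] is unitary. -/
noncomputable section
open ContinuousLinearMap

/-- ℓ²(ℕ) over ℂ. -/
abbrev H : Type := lp (fun _ : ℕ => ℂ) 2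

/-- The canonical orthonormal basis vectors of ℓ²(ℕ). -/
def e (n : ℕ) : H := lp.single 2 n 1

/-! Let `q = s s*` be the range projection of the isometry `s`. Since `α 0 = 1` forces `β 0 = 0`,
`a` is the identity and `b` vanishes on `ker s* = ℂ e 0`, so `b q = b` and `a q a + b² = q`.
Together with `s* s = 1`, `a b = b a` and `a² + b² = 1`, this reduces every entry of `u u*` and
`u* u` to `0` or `1` by pure algebra in the *-algebra of bounded operators. -/

open scoped InnerProductSpace

namespace HilbertBasis

section

variable {ι 𝕜 E : Type*} [RCLike 𝕜] [NormedAddCommGroup E] [InnerProductSpace 𝕜 E]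
  (v : HilbertBasis ι 𝕜 E)

theorem ext_continuousLinearMap {F : Type*} [TopologicalSpace F] [AddCommGroup F] [Module 𝕜 F]
    [T2Space F] {f g : E →L[𝕜] F} (h : ∀ i, f (v i) = g (v i)) : f = g :=
  ContinuousLinearMap.ext_on (Submodule.dense_iff_topologicalClosure_eq_top.mpr v.dense_span)
    (Set.forall_mem_range.mpr h)

theorem ext_inner {x y : E} (h : ∀ i, ⟪v i, x⟫_𝕜 = ⟪v i, y⟫_𝕜) : x = y :=
  v.repr.injective (lp.ext (funext fun i => by simpa only [v.repr_apply_apply] using h i))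

theorem inner_eq_ite [DecidableEq ι] (i j : ι) : ⟪v i, v j⟫_𝕜 = if i = j then 1 else 0 :=
  orthonormal_iff_ite.mp v.orthonormal i j

theorem commute_of_apply_eq_smul {a b : E →L[𝕜] E} {c d : ι → 𝕜}
    (ha : ∀ i, a (v i) = c i • v i) (hb : ∀ i, b (v i) = d i • v i) : Commute a b :=
  v.ext_continuousLinearMap (f := a * b) (g := b * a) fun i => by
    simp only [mul_apply_eq_comp, ha, hb, map_smul, smul_smul, mul_comm (c i)]

variable [CompleteSpace E]

theorem adjoint_apply_of_apply_eq_smul {a : E →L[𝕜] E} {c : ι → 𝕜}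
    (ha : ∀ i, a (v i) = c i • v i) (i : ι) : adjoint a (v i) = starRingEnd 𝕜 (c i) • v i := by
  classical
  refine v.ext_inner fun j => ?_
  rw [adjoint_inner_right, ha, inner_smul_left, inner_smul_right, v.inner_eq_ite]
  split_ifs with hji <;> simp [hji]

theorem isSelfAdjoint_of_apply_eq_smul {a : E →L[𝕜] E} {c : ι → ℝ}
    (ha : ∀ i, a (v i) = (c i : 𝕜) • v i) : IsSelfAdjoint a :=
  v.ext_continuousLinearMap fun i => by
    rw [star_eq_adjoint, v.adjoint_apply_of_apply_eq_smul ha, RCLike.conj_ofReal, ha]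

end

section Shift

variable {𝕜 E : Type*} [RCLike 𝕜] [NormedAddCommGroup E] [InnerProductSpace 𝕜 E] [CompleteSpace E]
  (v : HilbertBasis ℕ 𝕜 E) {s : E →L[𝕜] E}

theorem adjoint_apply_zero_of_shift (hs : ∀ n, s (v n) = v (n + 1)) : adjoint s (v 0) = 0 :=
  v.ext_inner fun m => by simp [adjoint_inner_right, hs, v.inner_eq_ite]

theorem adjoint_apply_succ_of_shift (hs : ∀ n, s (v n) = v (n + 1)) (n : ℕ) :
    adjoint s (v (n + 1)) = v n :=
  v.ext_inner fun m => by simp [adjoint_inner_right, hs, v.inner_eq_ite]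

theorem star_mul_self_of_shift (hs : ∀ n, s (v n) = v (n + 1)) : star s * s = 1 :=
  v.ext_continuousLinearMap fun n => by
    simp [star_eq_adjoint, mul_apply_eq_comp, hs, v.adjoint_apply_succ_of_shift hs]

theorem mul_one_sub_mul_star_of_shift {a : E →L[𝕜] E} {c : ℕ → 𝕜}
    (hs : ∀ n, s (v n) = v (n + 1)) (ha : ∀ n, a (v n) = c n • v n) :
    a * (1 - s * star s) = c 0 • (1 - s * star s) :=
  v.ext_continuousLinearMap fun n => by
    cases n <;> simp [star_eq_adjoint, mul_apply_eq_comp, ha, hs, v.adjoint_apply_zero_of_shift hs,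
      v.adjoint_apply_succ_of_shift hs]

end Shift

theorem coe_default_lp {ι 𝕜 : Type*} [RCLike 𝕜] [DecidableEq ι] :
    ⇑(default : HilbertBasis ι 𝕜 (lp (fun _ : ι => 𝕜) 2)) = fun i => lp.single 2 i (1 : 𝕜) :=
  funext fun i => (HilbertBasis.repr_symm_single _ i).symm

end HilbertBasis

open Complex in
theorem Matrix.blockMatrix_mem_unitary_of_isometry {R : Type*} [Ring R] [StarRing R] [Algebra ℂ R] [StarModule ℂ R]
    {s a b : R} (hs : star s * s = 1) (ha : IsSelfAdjoint a) (hb : IsSelfAdjoint b)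
    (hab : Commute a b) (hab_sq : a * a + b * b = 1)
    (ha_ker : a * (1 - s * star s) = 1 - s * star s) (hb_ker : b * (1 - s * star s) = 0) :
    !![star s * a * s, I • (star s * b); I • (b * s), a] ∈ unitary (Matrix (Fin 2) (Fin 2) R) := by
  have hbq : b * (s * star s) = b := by
    rw [mul_sub, mul_one, sub_eq_zero] at hb_ker; exact hb_ker.symm
  have hqb : s * star s * b = b := by
    simpa [star_mul, hb.star_eq, mul_assoc] using congr_arg star hbq
  have hqa : (1 - s * star s) * a = 1 - s * star s := by
    simpa [star_mul, ha.star_eq, mul_assoc] using congr_arg star ha_ker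
  have haqa : a * (s * star s) * a + b * b = s * star s := calc
    _ = (a * a + b * b) - a * (1 - s * star s) * a := by noncomm_ring
    _ = s * star s := by rw [hab_sq, ha_ker, hqa, sub_sub_cancel]
  have h₁₁ : star s * (a * (s * (star s * (a * s)))) + star s * (b * (b * s)) = 1 := calc
    _ = star s * ((a * (s * star s) * a + b * b) * s) := by noncomm_ring
    _ = (star s * s) * (star s * s) := by rw [haqa]; noncomm_ring
    _ = 1 := by rw [hs, one_mul]
  have h₁₂ : star s * (a * (s * (star s * b))) = star s * (b * a) := by
    rw [← mul_assoc s, hqb, hab.eq]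
  have h₂₁ : b * (s * (star s * (a * s))) = a * (b * s) := calc
    _ = b * (s * star s) * a * s := by noncomm_ring
    _ = a * (b * s) := by rw [hbq, ← hab.eq, mul_assoc]
  have h₂₂ : b * (s * (star s * b)) + a * a = 1 := by
    rw [← mul_assoc s, hqb, add_comm, hab_sq]
  rw [Unitary.mem_iff, Matrix.star_eq_conjTranspose, Matrix.eta_fin_two (Matrix.conjTranspose _)]
  simp [Matrix.one_fin_two, star_smul, smul_smul, ha.star_eq, hb.star_eq, mul_assoc, h₁₁, h₁₂, h₂₁, h₂₂]

/-- the block operator u = [[s* a s, i s* b],[i b s, a]] on ℓ²(ℕ) ⊗ ℂ²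
(written as a 2×2 matrix of bounded operators on ℓ²(ℕ)) is unitary. -/
theorem block_operator_unitary (α β : ℕ → ℝ) (hα0 : α 0 = 1)
    (hαβ : ∀ n, α n ^ 2 + β n ^ 2 = 1)
    (s a b : H →L[ℂ] H)
    (hs : ∀ n, s (e n) = e (n + 1))
    (ha : ∀ n, a (e n) = (α n : ℂ) • e n)
    (hb : ∀ n, b (e n) = (β n : ℂ) • e n)
    (u : Matrix (Fin 2) (Fin 2) (H →L[ℂ] H))
    (hu : u = !![adjoint s ∘L a ∘L s, Complex.I • (adjoint s ∘L b);
                 Complex.I • (b ∘L s), a]) :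
    u * u.conjTranspose = 1 ∧ u.conjTranspose * u = 1 := by
  obtain ⟨v, hv⟩ : ∃ v : HilbertBasis ℕ ℂ H, ⇑v = e := ⟨default, HilbertBasis.coe_default_lp⟩
  rw [← hv] at hs ha hb
  have hβ0 : β 0 = 0 := by nlinarith [hαβ 0]
  have hab_sq : a * a + b * b = 1 := v.ext_continuousLinearMap fun n => by
    have hn : (α n : ℂ) * α n + β n * β n = 1 := by rw [← sq, ← sq]; exact_mod_cast hαβ n
    simp only [add_apply, mul_apply_eq_comp, ha, hb, map_smul, smul_smul, ← add_smul, hn,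
      one_smul, one_apply_eq_self]
  have hu_mem := Matrix.blockMatrix_mem_unitary_of_isometry (v.star_mul_self_of_shift hs)
    (v.isSelfAdjoint_of_apply_eq_smul ha) (v.isSelfAdjoint_of_apply_eq_smul hb)
    (v.commute_of_apply_eq_smul ha hb) hab_sq
    (by rw [v.mul_one_sub_mul_star_of_shift hs ha, hα0, Complex.ofReal_one, one_smul])
    (by rw [v.mul_one_sub_mul_star_of_shift hs hb, hβ0, Complex.ofReal_zero, zero_smul])
  subst hu
  exact ⟨hu_mem.2, hu_mem.1⟩
end
end

section
/- With notation as in the construction (shift s, diagonal operators a, b with a²+b²=1, α₀=1, β₀=0), for a state ψ on M₂ with density matrix ρ = [[λ, ζ̄√(λ(1−λ))],[ζ√(λ(1−λ)),1−λ]], 0<λ≤1, the transition operator T_ψ(x) := P_ψ(u*(x⊗1)u) satisfies, for every bounded operator x on ℓ²(ℕ), T_ψ(x) = λ(t₁* x t₁ + t₂* x t₂) + (1−λ)(1−|ζ|²)(t₃* x t₃ + t₄* x t₄), where t₁ = s* a s + iζ√((1−λ)/λ) s* b, t₂ = b s − iζ√((1−λ)/λ) a, t₃ = s* b, t₄ =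 a. -/
noncomputable section
open ContinuousLinearMap

/-- The slice map applied to u*(x⊗1)u: for a block matrix M = Σ xᵢⱼ ⊗ Eᵢⱼ and a state ψ
with density matrix ρ (so ψ(Eᵢⱼ) = ρ j i), P_ψ(M) = Σᵢⱼ ρ j i • Mᵢⱼ.  This defines
the transition operator T_ψ(x) = P_ψ(u*(x⊗1)u). -/
def transOp (u : Matrix (Fin 2) (Fin 2) (H →L[ℂ] H)) (ρ : Matrix (Fin 2) (Fin 2) ℂ)
    (x : H →L[ℂ] H) : H →L[ℂ] H :=
  ∑ i : Fin 2, ∑ j : Fin 2, ρ j i • ((u.conjTranspose * !![x, 0; 0, x] * u) i j)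

/-! The density matrix splits as `ρ = λ • v v* + (1 - λ)(1 - |ζ|²) • e₂ e₂*` with
`v = (1, ζ √((1 - λ)/λ))`. The transition operator is linear in `ρ`, and a rank-one density
`w w*` contributes `∑ₖ Kₖ* x Kₖ` with Kraus operators `Kₖ = ∑ⱼ wⱼ uₖⱼ`. For `v` these are `t₁`
and `i t₂`, for `e₂` they are `i t₃` and `t₄`, and unimodular phases cancel in `K* x K`. -/

open Matrix

lemma transOp_add (u : Matrix (Fin 2) (Fin 2) (H →L[ℂ] H)) (ρ σ : Matrix (Fin 2) (Fin 2) ℂ)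
    (x : H →L[ℂ] H) : transOp u (ρ + σ) x = transOp u ρ x + transOp u σ x := by
  simp only [transOp, Matrix.add_apply, add_smul, Finset.sum_add_distrib]

lemma transOp_smul (u : Matrix (Fin 2) (Fin 2) (H →L[ℂ] H)) (c : ℂ)
    (ρ : Matrix (Fin 2) (Fin 2) ℂ) (x : H →L[ℂ] H) :
    transOp u (c • ρ) x = c • transOp u ρ x := by
  simp only [transOp, Matrix.smul_apply, smul_eq_mul, mul_smul, Finset.smul_sum]

lemma transOp_vecMulVec (u : Matrix (Fin 2) (Fin 2) (H →L[ℂ] H)) (w : Fin 2 → ℂ)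
    (x : H →L[ℂ] H) :
    transOp u (vecMulVec w (star w)) x
      = ∑ k, adjoint (∑ j, w j • u k j) ∘L x ∘L ∑ j, w j • u k j := by
  simp only [transOp, Matrix.mul_apply, Fin.sum_univ_two, vecMulVec_apply, conjTranspose_apply,
    Matrix.of_apply, Matrix.cons_val', Matrix.cons_val_zero, Matrix.cons_val_one,
    Matrix.empty_val', Matrix.cons_val_fin_one, Pi.star_apply,
    ← star_eq_adjoint, star_add, star_smul, mul_def, comp_add, add_comp, smul_comp, comp_smul,
    comp_zero, zero_comp, add_zero, zero_add, comp_assoc]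
  module

lemma adjoint_smul_comp_comp_smul {𝕜 E F : Type*} [RCLike 𝕜] [NormedAddCommGroup E]
    [InnerProductSpace 𝕜 E] [CompleteSpace E] [NormedAddCommGroup F] [InnerProductSpace 𝕜 F]
    [CompleteSpace F] {c : 𝕜} (hc : ‖c‖ = 1) (T : E →L[𝕜] F) (x : F →L[𝕜] F) :
    adjoint (c • T) ∘L x ∘L (c • T) = adjoint T ∘L x ∘L T := by
  rw [map_smulₛₗ, smul_comp, comp_smul, comp_smul, smul_smul, RCLike.conj_mul, hc]
  simp

lemma Real.sqrt_mul_eq_mul_sqrt_div {l : ℝ} (hl : 0 < l) (m : ℝ) :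
    √(l * m) = l * √(m / l) := by
  rw [show l * m = l ^ 2 * (m / l) by field_simp, Real.sqrt_mul (sq_nonneg l),
    Real.sqrt_sq hl.le]

lemma Real.mul_sq_sqrt_div {l m : ℝ} (hl : 0 < l) (hm : 0 ≤ m) : l * √(m / l) ^ 2 = m := by
  rw [Real.sq_sqrt (div_nonneg hm hl.le)]
  field_simp

lemma densityMatrix_eq_add_vecMulVec {l : ℝ} (hl0 : 0 < l) (hl1 : l ≤ 1) (ζ : ℂ) :
    !![(l : ℂ), (starRingEnd ℂ) ζ * ((√(l * (1 - l)) : ℝ) : ℂ);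
       ζ * ((√(l * (1 - l)) : ℝ) : ℂ), ((1 - l : ℝ) : ℂ)]
      = (l : ℂ) • vecMulVec ![1, ζ * (√((1 - l) / l) : ℝ)] (star ![1, ζ * (√((1 - l) / l) : ℝ)])
        + (((1 - l) * (1 - ‖ζ‖ ^ 2) : ℝ) : ℂ) • vecMulVec ![0, 1] (star ![0, 1]) := by
  have hR : (l : ℂ) * (√((1 - l) / l) : ℝ) ^ 2 = 1 - l := by
    exact_mod_cast Real.mul_sq_sqrt_div hl0 (sub_nonneg.mpr hl1)
  ext i j
  rw [Matrix.add_apply, Matrix.smul_apply, Matrix.smul_apply, vecMulVec_apply, vecMulVec_apply]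
  fin_cases i <;> fin_cases j <;> simp [Real.sqrt_mul_eq_mul_sqrt_div hl0]
  · ring
  · ring
  · linear_combination -(ζ * (starRingEnd ℂ) ζ) * hR - (1 - (l : ℂ)) * Complex.mul_conj' ζ

theorem kraus_decomposition_general
    (s a b : H →L[ℂ] H)
    (l : ℝ) (hl0 : 0 < l) (hl1 : l ≤ 1) (ζ : ℂ)
    (u : Matrix (Fin 2) (Fin 2) (H →L[ℂ] H))
    (hu : u = !![adjoint s ∘L a ∘L s, Complex.I • (adjoint s ∘L b);
                 Complex.I • (b ∘L s), a])
    (ρ : Matrix (Fin 2) (Fin 2) ℂ)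
    (hρ : ρ = !![(l : ℂ), (starRingEnd ℂ) ζ * ((Real.sqrt (l * (1 - l)) : ℝ) : ℂ);
                 ζ * ((Real.sqrt (l * (1 - l)) : ℝ) : ℂ), ((1 - l : ℝ) : ℂ)])
    (t₁ t₂ t₃ t₄ : H →L[ℂ] H)
    (ht₁ : t₁ = adjoint s ∘L a ∘L s
        + (Complex.I * ζ * ((Real.sqrt ((1 - l) / l) : ℝ) : ℂ)) • (adjoint s ∘L b))
    (ht₂ : t₂ = b ∘L s - (Complex.I * ζ * ((Real.sqrt ((1 - l) / l) : ℝ) : ℂ)) • a)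
    (ht₃ : t₃ = adjoint s ∘L b)
    (ht₄ : t₄ = a) :
    ∀ x : H →L[ℂ] H,
      transOp u ρ x
        = (l : ℂ) • (adjoint t₁ ∘L x ∘L t₁ + adjoint t₂ ∘L x ∘L t₂)
          + (((1 - l) * (1 - ‖ζ‖ ^ 2) : ℝ) : ℂ) •
              (adjoint t₃ ∘L x ∘L t₃ + adjoint t₄ ∘L x ∘L t₄) := by
  intro x
  have hK₁ : adjoint s ∘L a ∘L s + (ζ * ((√((1 - l) / l) : ℝ) : ℂ)) • Complex.I • adjoint s ∘L b
      = t₁ := by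
    rw [ht₁]
    module
  have hK₂ : Complex.I • b ∘L s + (ζ * ((√((1 - l) / l) : ℝ) : ℂ)) • a = Complex.I • t₂ := by
    rw [ht₂]
    linear_combination (norm := module) (ζ * ((√((1 - l) / l) : ℝ) : ℂ)) • Complex.I_mul_I • a
  rw [hρ, densityMatrix_eq_add_vecMulVec hl0 hl1, transOp_add, transOp_smul, transOp_smul,
    transOp_vecMulVec, transOp_vecMulVec]
  simp only [Fin.sum_univ_two, hu, Matrix.of_apply, Matrix.cons_val', Matrix.cons_val_zero,
    Matrix.cons_val_one, Matrix.empty_val', Matrix.cons_val_fin_one, one_smul, zero_smul, zero_add]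
  rw [hK₁, hK₂, ← ht₃, ← ht₄, adjoint_smul_comp_comp_smul (by simp),
    adjoint_smul_comp_comp_smul (by simp)]

/-- Kraus decomposition of the transition operator T_ψ. -/
theorem kraus_decomposition (α β : ℕ → ℝ) (hα0 : α 0 = 1) (hβ0 : β 0 = 0)
    (hαβ : ∀ n, α n ^ 2 + β n ^ 2 = 1) (hβ : ∀ n, 1 ≤ n → β n ≠ 0)
    (s a b : H →L[ℂ] H)
    (hs : ∀ n, s (e n) = e (n + 1))
    (ha : ∀ n, a (e n) = (α n : ℂ) • e n)
    (hb : ∀ n, b (e n) = (β n : ℂ) • e n)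
    (l : ℝ) (hl0 : 0 < l) (hl1 : l ≤ 1) (ζ : ℂ) (hζ : ‖ζ‖ ≤ 1)
    (u : Matrix (Fin 2) (Fin 2) (H →L[ℂ] H))
    (hu : u = !![adjoint s ∘L a ∘L s, Complex.I • (adjoint s ∘L b);
                 Complex.I • (b ∘L s), a])
    (ρ : Matrix (Fin 2) (Fin 2) ℂ)
    (hρ : ρ = !![(l : ℂ), (starRingEnd ℂ) ζ * ((Real.sqrt (l * (1 - l)) : ℝ) : ℂ);
                 ζ * ((Real.sqrt (l * (1 - l)) : ℝ) : ℂ), ((1 - l : ℝ) : ℂ)])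
    (t₁ t₂ t₃ t₄ : H →L[ℂ] H)
    (ht₁ : t₁ = adjoint s ∘L a ∘L s
        + (Complex.I * ζ * ((Real.sqrt ((1 - l) / l) : ℝ) : ℂ)) • (adjoint s ∘L b))
    (ht₂ : t₂ = b ∘L s - (Complex.I * ζ * ((Real.sqrt ((1 - l) / l) : ℝ) : ℂ)) • a)
    (ht₃ : t₃ = adjoint s ∘L b)
    (ht₄ : t₄ = a) :
    ∀ x : H →L[ℂ] H,
      transOp u ρ x
        = (l : ℂ) • (adjoint t₁ ∘L x ∘L t₁ + adjoint t₂ ∘L x ∘L t₂)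
          + (((1 - l) * (1 - ‖ζ‖ ^ 2) : ℝ) : ℂ) •
              (adjoint t₃ ∘L x ∘L t₃ + adjoint t₄ ∘L x ∘L t₄) :=
  kraus_decomposition_general s a b l hl0 hl1 ζ u hu ρ hρ t₁ t₂ t₃ t₄ ht₁ ht₂ ht₃ ht₄
end
end

section
/- Let u_θ be the diagonal unitary on ℓ²(ℕ) with u_θ eₙ = θⁿ eₙ for |θ|=1, and v_θ = diag(1, θ̄) on ℂ². If ψ_θ := ψ(v_θ* · v_θ), then for every bounded operator x on ℓ²(ℕ), T_{ψ_θ}(x) = u_θ T_ψ(u_θ* x u_θ) u_θ*; in particular T_ψ and T_{ψ_θ} are unitarily conjugate. -/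
/-!
Conjugation by the unitary `u_θ` is a ⋆-automorphism of `B(ℓ²(ℕ))` that fixes the diagonal
operators `a`, `b` and scales the shift, `u_θ s u_θ* = θ s`; hence it multiplies the `(k, j)` entry
of the block unitary `u` by `θᵏ θ̄ʲ`. In `T_ψ(x) = ∑ ρⱼᵢ ∑ₖ uₖᵢ* x uₖⱼ` these phases are exactly
the ones produced by passing from `ρ` to `v_θ ρ v_θ*`.
-/

noncomputable section
open ContinuousLinearMap
open scoped ComplexOrder

open scoped InnerProductSpace ComplexConjugate

lemma inner_e_left (n : ℕ) (v : H) : ⟪e n, v⟫_ℂ = v n := by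
  simp [e, lp.inner_single_left]

lemma inner_e_e (n m : ℕ) : ⟪e n, e m⟫_ℂ = if n = m then 1 else 0 := by
  rw [inner_e_left, e, lp.single_apply]
  by_cases h : n = m
  · subst h; simp
  · simp [h]

lemma ext_e {F : Type*} [NormedAddCommGroup F] [NormedSpace ℂ F]
    {f g : H →L[ℂ] F} (h : ∀ n, f (e n) = g (e n)) : f = g :=
  lp.ext_continuousLinearMap ENNReal.ofNat_ne_top fun n => ContinuousLinearMap.ext_ring (h n)

lemma ext_inner_e {v w : H} (h : ∀ m, ⟪e m, v⟫_ℂ = ⟪e m, w⟫_ℂ) : v = w :=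
  lp.ext <| funext fun m => by simpa only [inner_e_left] using h m

section Rotation

variable {θ : ℂ} {r : H →L[ℂ] H} (hr : ∀ n, r (e n) = θ ^ n • e n)
include hr

lemma adjoint_rot_apply_e (n : ℕ) : adjoint r (e n) = conj θ ^ n • e n := by
  refine ext_inner_e fun m => ?_
  rw [adjoint_inner_right, hr, inner_smul_left, inner_smul_right, inner_e_e, map_pow]
  split_ifs with h
  · rw [h]
  · simp

lemma rot_mem_unitary (hθ : ‖θ‖ = 1) : r ∈ unitary (H →L[ℂ] H) := by
  have hθθ (n : ℕ) : conj θ ^ n * θ ^ n = 1 := by rw [← mul_pow, Complex.conj_mul', hθ]; simp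
  rw [Unitary.mem_iff, star_eq_adjoint]
  constructor <;> refine ext_e fun n => ?_
  · rw [mul_apply_eq_comp, hr, map_smul, adjoint_rot_apply_e hr, smul_smul, mul_comm, hθθ,
      one_smul, one_apply_eq_self]
  · rw [mul_apply_eq_comp, adjoint_rot_apply_e hr, map_smul, hr, smul_smul, hθθ,
      one_smul, one_apply_eq_self]

lemma rot_mul_shift {s : H →L[ℂ] H} (hs : ∀ n, s (e n) = e (n + 1)) : r * s = θ • (s * r) :=
  ext_e fun n => by
    simp only [mul_apply_eq_comp, smul_apply, hs, hr, map_smul, smul_smul, pow_succ, mul_comm]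

lemma commute_rot_of_diagonal {d : H →L[ℂ] H} {c : ℕ → ℂ} (hd : ∀ n, d (e n) = c n • e n) :
    Commute r d :=
  ext_e fun n => by
    simp only [mul_apply_eq_comp, hd, hr, map_smul, smul_smul, mul_comm]

end Rotation

lemma transOp_eq_sum (u : Matrix (Fin 2) (Fin 2) (H →L[ℂ] H)) (ρ : Matrix (Fin 2) (Fin 2) ℂ)
    (x : H →L[ℂ] H) :
    transOp u ρ x = ∑ i, ∑ j, ρ j i • ∑ k, star (u k i) * x * u k j := by
  simp only [transOp, Matrix.mul_apply, Matrix.conjTranspose_apply, Matrix.of_apply,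
    Matrix.cons_val', Matrix.cons_val_fin_one, Fin.sum_univ_two, Matrix.cons_val_zero,
    Matrix.cons_val_one, mul_zero, add_zero, zero_add, smul_add]

lemma transOp_diagonal_conj (Φ : (H →L[ℂ] H) ≃⋆ₐ[ℂ] (H →L[ℂ] H))
    (u : Matrix (Fin 2) (Fin 2) (H →L[ℂ] H)) (ρ : Matrix (Fin 2) (Fin 2) ℂ) (ζ : Fin 2 → ℂ)
    (hζ : ∀ k, star (ζ k) * ζ k = 1) (hΦ : ∀ k j, Φ (u k j) = (ζ k * star (ζ j)) • u k j)
    (x : H →L[ℂ] H) :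
    transOp u (Matrix.diagonal (star ζ) * ρ * Matrix.diagonal ζ) x =
      Φ (transOp u ρ (Φ.symm x)) := by
  simp only [transOp_eq_sum, map_sum, map_smul, map_mul, map_star, hΦ,
    StarAlgEquiv.apply_symm_apply, Matrix.mul_diagonal, Matrix.diagonal_mul, star_smul,
    smul_mul_assoc, mul_smul_comm, smul_smul, Finset.smul_sum]
  refine Finset.sum_congr rfl fun i _ => Finset.sum_congr rfl fun j _ => Finset.sum_congr rfl
    fun k _ => ?_
  congr 1
  simp only [star_mul, star_star, Pi.star_apply]
  linear_combination -(star (ζ j) * ρ j i * ζ i) * hζ k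

def dilation (s a b : H →L[ℂ] H) : Matrix (Fin 2) (Fin 2) (H →L[ℂ] H) :=
  !![adjoint s ∘L a ∘L s, Complex.I • (adjoint s ∘L b); Complex.I • (b ∘L s), a]

lemma map_dilation {Φ : (H →L[ℂ] H) ≃⋆ₐ[ℂ] (H →L[ℂ] H)} {s a b : H →L[ℂ] H} {θ : ℂ}
    (hθ : star θ * θ = 1) (hs : Φ s = θ • s) (ha : Φ a = a) (hb : Φ b = b) (k j : Fin 2) :
    Φ (dilation s a b k j) = (θ ^ (k : ℕ) * star (θ ^ (j : ℕ))) • dilation s a b k j := by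
  have hs' : Φ (adjoint s) = star θ • adjoint s := by
    rw [← star_eq_adjoint, map_star, hs, star_smul]
  have hθ' : θ * conj θ = 1 := by rw [mul_comm, ← hθ, Complex.star_def]
  fin_cases k <;> fin_cases j <;>
    simp [dilation, ← mul_def, hs, hs', ha, hb, smul_smul, hθ', mul_comm Complex.I]

section RotationAut

variable {θ : ℂ} (hθ : ‖θ‖ = 1) {r : H →L[ℂ] H} (hr : ∀ n, r (e n) = θ ^ n • e n)
include hθ hr

lemma conjStarAlgAut_rot_shift {s : H →L[ℂ] H} (hs : ∀ n, s (e n) = e (n + 1)) :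
    Unitary.conjStarAlgAut ℂ _ ⟨r, rot_mem_unitary hr hθ⟩ s = θ • s := by
  rw [Unitary.conjStarAlgAut_apply, rot_mul_shift hr hs, smul_mul_assoc, mul_assoc,
    Unitary.mul_star_self_of_mem (rot_mem_unitary hr hθ), mul_one]

lemma conjStarAlgAut_rot_diagonal {d : H →L[ℂ] H} {c : ℕ → ℂ} (hd : ∀ n, d (e n) = c n • e n) :
    Unitary.conjStarAlgAut ℂ _ ⟨r, rot_mem_unitary hr hθ⟩ d = d := by
  rw [Unitary.conjStarAlgAut_apply, (commute_rot_of_diagonal hr hd).eq, mul_assoc,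
    Unitary.mul_star_self_of_mem (rot_mem_unitary hr hθ), mul_one]

end RotationAut

theorem rotation_conjugation_general (α β : ℕ → ℝ)
    (s a b : H →L[ℂ] H)
    (hs : ∀ n, s (e n) = e (n + 1))
    (ha : ∀ n, a (e n) = (α n : ℂ) • e n)
    (hb : ∀ n, b (e n) = (β n : ℂ) • e n)
    (u : Matrix (Fin 2) (Fin 2) (H →L[ℂ] H))
    (hu : u = !![adjoint s ∘L a ∘L s, Complex.I • (adjoint s ∘L b);
                 Complex.I • (b ∘L s), a])
    (ρ : Matrix (Fin 2) (Fin 2) ℂ)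
    (θ : ℂ) (hθ : ‖θ‖ = 1)
    (uθ : H →L[ℂ] H) (huθ : ∀ n, uθ (e n) = θ ^ n • e n)
    (vθ : Matrix (Fin 2) (Fin 2) ℂ) (hvθ : vθ = !![1, 0; 0, (starRingEnd ℂ) θ]) :
    ∀ x : H →L[ℂ] H,
      transOp u (vθ * ρ * vθ.conjTranspose) x
        = uθ ∘L transOp u ρ (adjoint uθ ∘L x ∘L uθ) ∘L adjoint uθ := by
  intro x
  have hθθ : star θ * θ = 1 := by rw [Complex.star_def, Complex.conj_mul', hθ]; simp
  let ζ : Fin 2 → ℂ := fun k => θ ^ (k : ℕ)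
  have hvθ_diag : vθ = Matrix.diagonal (star ζ) := by
    subst hvθ
    ext i j
    fin_cases i <;> fin_cases j <;> simp [ζ]
  have hconj :=
    transOp_diagonal_conj (Unitary.conjStarAlgAut ℂ _ ⟨uθ, rot_mem_unitary huθ hθ⟩) u ρ ζ
      (fun k => by simp only [ζ, star_pow, ← mul_pow, hθθ, one_pow])
      (fun k j => hu ▸ map_dilation hθθ (conjStarAlgAut_rot_shift hθ huθ hs)
        (conjStarAlgAut_rot_diagonal hθ huθ ha) (conjStarAlgAut_rot_diagonal hθ huθ hb) k j) x
  rw [hvθ_diag, Matrix.diagonal_conjTranspose, star_star, hconj, Unitary.conjStarAlgAut_apply,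
    Unitary.conjStarAlgAut_symm_apply]
  simp only [star_eq_adjoint, mul_def, comp_assoc]

/-- T_{ψ_θ}(x) = u_θ T_ψ(u_θ* x u_θ) u_θ*, where ψ_θ = ψ(v_θ* · v_θ) has
density matrix v_θ ρ v_θ*, and u_θ eₙ = θⁿ eₙ. -/
theorem rotation_conjugation (α β : ℕ → ℝ) (hα0 : α 0 = 1)
    (hαβ : ∀ n, α n ^ 2 + β n ^ 2 = 1)
    (s a b : H →L[ℂ] H)
    (hs : ∀ n, s (e n) = e (n + 1))
    (ha : ∀ n, a (e n) = (α n : ℂ) • e n)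
    (hb : ∀ n, b (e n) = (β n : ℂ) • e n)
    (u : Matrix (Fin 2) (Fin 2) (H →L[ℂ] H))
    (hu : u = !![adjoint s ∘L a ∘L s, Complex.I • (adjoint s ∘L b);
                 Complex.I • (b ∘L s), a])
    (ρ : Matrix (Fin 2) (Fin 2) ℂ) (hρpos : ρ.PosSemidef) (hρtr : ρ.trace = 1)
    (θ : ℂ) (hθ : ‖θ‖ = 1)
    (uθ : H →L[ℂ] H) (huθ : ∀ n, uθ (e n) = θ ^ n • e n)
    (vθ : Matrix (Fin 2) (Fin 2) ℂ) (hvθ : vθ = !![1, 0; 0, (starRingEnd ℂ) θ]) :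
    ∀ x : H →L[ℂ] H,
      transOp u (vθ * ρ * vθ.conjTranspose) x
        = uθ ∘L transOp u ρ (adjoint uθ ∘L x ∘L uθ) ∘L adjoint uθ :=
  rotation_conjugation_general α β s a b hs ha hb u hu ρ θ hθ uθ huθ vθ hvθ
end
end

section
/- Let T : B(H) → B(H) be given by T(x) = Σ_{i∈I} aᵢ* x aᵢ with Σ aᵢ* aᵢ = 1 (finite index set I). A projection p ∈ B(H) satisfies T(p) ≥ p if and only if aᵢ p = p aᵢ p for every i ∈ I. -/
/-! Write `q = 1 - p` and `bᵢ = q aᵢ p`. Unitality gives the corner identities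
`p (T p - p) p = -∑ bᵢ⋆ bᵢ` and `q (T p) q = ∑ (p aᵢ q)⋆ (p aᵢ q)`. If `p ≤ T p`, the first corner
is both nonnegative and nonpositive, so each `bᵢ⋆ bᵢ` vanishes and `bᵢ = 0` by the C⋆-identity.
Conversely, if every `bᵢ = 0` then `(T p - p) p = -∑ aᵢ⋆ bᵢ = 0`, so the self-adjoint `T p - p`
is supported on the corner of `q`, where it equals `q (T p) q ≥ 0`. -/

open ContinuousLinearMap

section StarRing

variable {R ι : Type*} [Ring R] [StarRing R] [Fintype ι] {p : R}

lemma IsStarProjection.sum_conj_sub_mul_self (hp : IsStarProjection p) {a : ι → R}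
    (ha : ∑ i, star (a i) * a i = 1) :
    (∑ i, star (a i) * p * a i - p) * p = -∑ i, star (a i) * ((1 - p) * a i * p) := by
  have : ∑ i, star (a i) * ((1 - p) * a i * p) = p - ∑ i, star (a i) * p * a i * p := by
    simp only [sub_mul, one_mul, mul_sub, Finset.sum_sub_distrib, ← mul_assoc, ← Finset.sum_mul,
      ha]
  rw [this, sub_mul, hp.isIdempotentElem.eq, Finset.sum_mul, neg_sub]

lemma IsStarProjection.mul_sum_conj_sub_mul (hp : IsStarProjection p) {a : ι → R}
    (ha : ∑ i, star (a i) * a i = 1) :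
    p * (∑ i, star (a i) * p * a i - p) * p =
      -∑ i, star ((1 - p) * a i * p) * ((1 - p) * a i * p) := by
  rw [mul_assoc, hp.sum_conj_sub_mul_self ha, mul_neg, Finset.mul_sum]
  congr! 2 with i
  simp only [star_mul, hp.isSelfAdjoint.star_eq, hp.one_sub.isSelfAdjoint.star_eq, mul_assoc,
    hp.one_sub.isIdempotentElem.mul_self_mul]

lemma IsStarProjection.one_sub_mul_sum_conj_mul (hp : IsStarProjection p) (a : ι → R) :
    (1 - p) * (∑ i, star (a i) * p * a i) * (1 - p) =
      ∑ i, star (p * a i * (1 - p)) * (p * a i * (1 - p)) := by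
  rw [Finset.mul_sum, Finset.sum_mul]
  congr! 1 with i
  simp only [star_mul, hp.isSelfAdjoint.star_eq, hp.one_sub.isSelfAdjoint.star_eq, mul_assoc,
    hp.isIdempotentElem.mul_self_mul]

lemma IsSelfAdjoint.eq_one_sub_mul_mul_one_sub {x : R} (hx : IsSelfAdjoint x)
    (hp : IsSelfAdjoint p) (hxp : x * p = 0) : x = (1 - p) * x * (1 - p) := by
  have hpx : p * x = 0 := by simpa [star_mul, hx.star_eq, hp.star_eq] using congr(star $hxp)
  rw [sub_mul, one_mul, hpx, sub_zero, mul_sub, mul_one, hxp, sub_zero]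

theorem IsStarProjection.le_sum_conj_of_forall_one_sub_mul_mul_eq_zero [PartialOrder R]
    [StarOrderedRing R] (hp : IsStarProjection p) {a : ι → R} (ha : ∑ i, star (a i) * a i = 1)
    (h : ∀ i, (1 - p) * a i * p = 0) : p ≤ ∑ i, star (a i) * p * a i := by
  have hx : IsSelfAdjoint (∑ i, star (a i) * p * a i - p) := by
    refine .sub (isSelfAdjoint_sum _ fun i _ => ?_) hp.isSelfAdjoint
    simpa only [star_star] using hp.isSelfAdjoint.conjugate (star (a i))
  have hxp : (∑ i, star (a i) * p * a i - p) * p = 0 := by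
    simp [hp.sum_conj_sub_mul_self ha, h]
  have hcorner : ∑ i, star (a i) * p * a i - p =
      ∑ i, star (p * a i * (1 - p)) * (p * a i * (1 - p)) := calc
    _ = (1 - p) * (∑ i, star (a i) * p * a i - p) * (1 - p) :=
      hx.eq_one_sub_mul_mul_one_sub hp.isSelfAdjoint hxp
    _ = (1 - p) * (∑ i, star (a i) * p * a i) * (1 - p) := by
      rw [mul_sub (1 - p), hp.one_sub_mul_self, sub_zero]
    _ = _ := hp.one_sub_mul_sum_conj_mul a
  rw [← sub_nonneg, hcorner]
  exact Finset.sum_nonneg fun i _ => star_mul_self_nonneg _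

end StarRing

theorem IsStarProjection.le_sum_conj_iff {R ι : Type*} [NormedRing R] [StarRing R] [CStarRing R]
    [PartialOrder R] [StarOrderedRing R] [Fintype ι] {p : R} (hp : IsStarProjection p)
    {a : ι → R} (ha : ∑ i, star (a i) * a i = 1) :
    p ≤ ∑ i, star (a i) * p * a i ↔ ∀ i, (1 - p) * a i * p = 0 := by
  refine ⟨fun hle => ?_, hp.le_sum_conj_of_forall_one_sub_mul_mul_eq_zero ha⟩
  have hnonneg : ∀ i ∈ Finset.univ, 0 ≤ star ((1 - p) * a i * p) * ((1 - p) * a i * p) :=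
    fun i _ => star_mul_self_nonneg _
  have hsum : ∑ i, star ((1 - p) * a i * p) * ((1 - p) * a i * p) = 0 := by
    refine le_antisymm ?_ (Finset.sum_nonneg hnonneg)
    rw [← neg_nonneg, ← hp.mul_sum_conj_sub_mul ha]
    simpa only [hp.isSelfAdjoint.star_eq] using star_left_conjugate_nonneg (sub_nonneg.mpr hle) p
  intro i
  exact (CStarRing.star_mul_self_eq_zero_iff _).mp <|
    (Finset.sum_eq_zero_iff_of_nonneg hnonneg).mp hsum i (Finset.mem_univ i)

/-- for T(x) = Σᵢ aᵢ* x aᵢ with Σᵢ aᵢ* aᵢ = 1 (finite I), a projection p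
satisfies T(p) ≥ p if and only if aᵢ p = p aᵢ p for every i. -/
theorem subharmonic_iff {H : Type*} [NormedAddCommGroup H] [InnerProductSpace ℂ H]
    [CompleteSpace H] {I : Type*} [Fintype I] (a : I → (H →L[ℂ] H))
    (hunital : ∑ i, adjoint (a i) ∘L a i = 1)
    (p : H →L[ℂ] H) (hsa : IsSelfAdjoint p) (hidem : p ∘L p = p) :
    ((∑ i, adjoint (a i) ∘L p ∘L a i) - p).IsPositive
      ↔ ∀ i, a i ∘L p = p ∘L (a i ∘L p) := by
  have hp : IsStarProjection p := ⟨hidem, hsa⟩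
  simp only [← star_eq_adjoint, ← mul_def, ← mul_assoc] at hunital ⊢
  rw [← le_def, hp.le_sum_conj_iff hunital]
  simp only [sub_mul, one_mul, sub_eq_zero]
end

section
/- Let T : B(H) → B(H), T(x) = Σ_{i∈I} aᵢ* x aᵢ with Σ aᵢ* aᵢ = 1 (finite I), and suppose φ is a faithful state on B(H) with φ∘T = φ. Then for μ ∈ ℂ with |μ| = 1 and x ∈ B(H): T(x) = μ x if and only if x aᵢ = μ aᵢ x for all i ∈ I. -/
noncomputable section
open ContinuousLinearMap
open scoped ComplexOrder

/-!
Put `T x = ∑ i, aᵢ⋆ x aᵢ` and `yᵢ = x aᵢ - μ aᵢ x`. Expanding, `∑ i, yᵢ⋆ yᵢ` equals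
`T (x⋆x) - μ T(x⋆) x - μ̄ x⋆ T(x) + |μ|² x⋆ T(1) x`, which collapses to `T (x⋆x) - x⋆x` when
`T 1 = 1`, `T x = μ x` and `|μ| = 1`. A `T`-invariant positive functional vanishes on it, so it
vanishes on every `yᵢ⋆ yᵢ`, and faithfulness forces `yᵢ = 0`. The converse is a one-line
computation using `T 1 = 1`.
-/

section KrausMap

variable {A I : Type*} [Ring A] [StarRing A] [Fintype I]

def krausMap (a : I → A) (x : A) : A := ∑ i, star (a i) * x * a i

theorem star_krausMap (a : I → A) (x : A) : star (krausMap a x) = krausMap a (star x) := by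
  simp only [krausMap, star_sum, star_mul, star_star, mul_assoc]

variable {R : Type*} [CommRing R] [Algebra R A]

theorem krausMap_eq_smul_of_forall_mul_eq {a : I → A} {x : A} {μ : R}
    (h : ∀ i, x * a i = μ • (a i * x)) : krausMap a x = μ • (krausMap a 1 * x) := by
  simp only [krausMap, mul_one, Finset.sum_mul, Finset.smul_sum, mul_assoc, h, mul_smul_comm]

variable [StarRing R] [StarModule R A]

theorem sum_star_mul_self_sub_smul_mul (a : I → A) (x : A) (μ : R) :
    ∑ i, star (x * a i - μ • (a i * x)) * (x * a i - μ • (a i * x)) =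
      krausMap a (star x * x) - μ • (krausMap a (star x) * x) -
        star μ • (star x * krausMap a x) + (star μ * μ) • (star x * krausMap a 1 * x) := by
  simp only [krausMap, star_sub, star_mul, star_smul, sub_mul, mul_sub, smul_mul_assoc,
    mul_smul_comm, Finset.sum_mul, Finset.mul_sum, Finset.smul_sum,
    ← Finset.sum_sub_distrib, ← Finset.sum_add_distrib, mul_assoc, mul_one]
  refine Finset.sum_congr rfl fun i _ => ?_
  rw [smul_sub, smul_smul, mul_comm μ (star μ)]
  abel

theorem sum_star_mul_self_sub_smul_mul_of_krausMap_eq_smul {a : I → A} {x : A} {μ : R}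
    (hunital : krausMap a 1 = 1) (hμ : star μ * μ = 1) (hx : krausMap a x = μ • x) :
    ∑ i, star (x * a i - μ • (a i * x)) * (x * a i - μ • (a i * x)) =
      krausMap a (star x * x) - star x * x := by
  have hxstar : krausMap a (star x) = star μ • star x := by
    rw [← star_krausMap, hx, star_smul]
  rw [sum_star_mul_self_sub_smul_mul, hxstar, hx, hunital, mul_one]
  simp only [smul_mul_assoc, mul_smul_comm, smul_smul, mul_comm μ (star μ), hμ, one_smul]
  abel

end KrausMap

theorem krausMap_eq_smul_iff {A I : Type*} [Ring A] [StarRing A] [Algebra ℂ A]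
    [StarModule ℂ A] [Fintype I] {a : I → A} (hunital : krausMap a 1 = 1) (φ : A →ₗ[ℂ] ℂ)
    (hφpos : ∀ y : A, 0 ≤ φ (star y * y)) (hφfaithful : ∀ y : A, φ (star y * y) = 0 → y = 0)
    (hφinv : ∀ y : A, φ (krausMap a y) = φ y) {μ : ℂ} (hμ : star μ * μ = 1) (x : A) :
    krausMap a x = μ • x ↔ ∀ i, x * a i = μ • (a i * x) := by
  refine ⟨fun hx i => ?_, fun h => by rw [krausMap_eq_smul_of_forall_mul_eq h, hunital, one_mul]⟩
  have hsum : ∑ j, φ (star (x * a j - μ • (a j * x)) * (x * a j - μ • (a j * x))) = 0 := by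
    rw [← map_sum, sum_star_mul_self_sub_smul_mul_of_krausMap_eq_smul hunital hμ hx, map_sub,
      hφinv, sub_self]
  have hterm := (Finset.sum_eq_zero_iff_of_nonneg fun j _ => hφpos _).mp hsum i
    (Finset.mem_univ i)
  exact sub_eq_zero.mp (hφfaithful _ hterm)

theorem peripheral_eigenvector_iff_general {H : Type*} [NormedAddCommGroup H]
    [InnerProductSpace ℂ H] [CompleteSpace H] {I : Type*} [Fintype I]
    (a : I → (H →L[ℂ] H)) (hunital : ∑ i, adjoint (a i) ∘L a i = 1)
    (φ : (H →L[ℂ] H) →ₗ[ℂ] ℂ)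
    (hφpos : ∀ x : H →L[ℂ] H, 0 ≤ φ (adjoint x ∘L x))
    (hφfaithful : ∀ x : H →L[ℂ] H, φ (adjoint x ∘L x) = 0 → x = 0)
    (hφinv : ∀ x : H →L[ℂ] H, φ (∑ i, adjoint (a i) ∘L x ∘L a i) = φ x)
    (μ : ℂ) (hμ : ‖μ‖ = 1) (x : H →L[ℂ] H) :
    (∑ i, adjoint (a i) ∘L x ∘L a i) = μ • x ↔ ∀ i, x ∘L a i = μ • (a i ∘L x) := by
  have hkraus : ∀ y, ∑ i, adjoint (a i) ∘L y ∘L a i = krausMap a y := fun y => by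
    simp only [krausMap, ← star_eq_adjoint, ← mul_def, mul_assoc]
  have hμ' : star μ * μ = 1 := by
    rw [Complex.star_def, Complex.conj_mul', hμ]
    norm_num
  simp only [← star_eq_adjoint, ← mul_def] at hφpos hφfaithful
  simp only [hkraus] at hφinv ⊢
  refine krausMap_eq_smul_iff ?_ φ hφpos hφfaithful hφinv hμ' x
  simpa only [krausMap, mul_one, ← star_eq_adjoint, ← mul_def] using hunital

/-- if T(x) = Σᵢ aᵢ* x aᵢ is unital (Σ aᵢ* aᵢ = 1) and φ is a faithful
T-invariant state on B(H), then for |μ| = 1:  T(x) = μ x  ↔  x aᵢ = μ aᵢ x for all i. -/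
theorem peripheral_eigenvector_iff {H : Type*} [NormedAddCommGroup H]
    [InnerProductSpace ℂ H] [CompleteSpace H] {I : Type*} [Fintype I]
    (a : I → (H →L[ℂ] H)) (hunital : ∑ i, adjoint (a i) ∘L a i = 1)
    (φ : (H →L[ℂ] H) →ₗ[ℂ] ℂ) (hφ1 : φ 1 = 1)
    (hφpos : ∀ x : H →L[ℂ] H, 0 ≤ φ (adjoint x ∘L x))
    (hφfaithful : ∀ x : H →L[ℂ] H, φ (adjoint x ∘L x) = 0 → x = 0)
    (hφinv : ∀ x : H →L[ℂ] H, φ (∑ i, adjoint (a i) ∘L x ∘L a i) = φ x)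
    (μ : ℂ) (hμ : ‖μ‖ = 1) (x : H →L[ℂ] H) :
    (∑ i, adjoint (a i) ∘L x ∘L a i) = μ • x ↔ ∀ i, x ∘L a i = μ • (a i ∘L x) :=
  peripheral_eigenvector_iff_general a hunital φ hφpos hφfaithful hφinv μ hμ x
end
end

section
/- Let T : B(H) → B(H), T(x) = Σ_{i∈I} aᵢ* x aᵢ with Σ aᵢ* aᵢ = 1, and suppose the linear span of {aᵢ : i ∈ I} is a self-adjoint subset of B(H). If a projection p satisfies aᵢ p = p aᵢ p for all i, then p commutes with every aᵢ and T(p) = p. -/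
open ContinuousLinearMap

/-! The relation `b p = p b p` is linear in `b`, so it passes from the `aᵢ` to their span, which
contains the `aᵢ*`. Taking adjoints in `aᵢ* p = p aᵢ* p` gives `p aᵢ = p aᵢ p`, hence `aᵢ p = p aᵢ`;
then `∑ aᵢ* p aᵢ = (∑ aᵢ* aᵢ) p = p`. -/

/-- For a projection `p`, the elements `b` that leave the range of `p` invariant. -/
def invariantSubmodule (R : Type*) {A : Type*} [Semiring R] [NonUnitalNonAssocSemiring A]
    [Module R A] [IsScalarTower R A A] [SMulCommClass R A A] (p : A) : Submodule R A where
  carrier := {b | b * p = p * b * p}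
  zero_mem' := by simp
  add_mem' {x y} hx hy := by simp_all [add_mul, mul_add]
  smul_mem' c x hx := by simp_all [smul_mul_assoc, mul_smul_comm]

theorem mem_invariantSubmodule {R A : Type*} [Semiring R] [NonUnitalNonAssocSemiring A]
    [Module R A] [IsScalarTower R A A] [SMulCommClass R A A] {p b : A} :
    b ∈ invariantSubmodule R p ↔ b * p = p * b * p :=
  Iff.rfl

theorem IsSelfAdjoint.commute_of_mem_invariantSubmodule {R A : Type*} [Semiring R]
    [NonUnitalSemiring A] [StarMul A] [Module R A] [IsScalarTower R A A] [SMulCommClass R A A]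
    {p b : A} (hp : IsSelfAdjoint p) (hb : b ∈ invariantSubmodule R p)
    (hb_star : star b ∈ invariantSubmodule R p) : Commute b p := by
  rw [mem_invariantSubmodule] at hb hb_star
  have hpb : p * b = p * b * p := by
    simpa [star_mul, hp.star_eq, mul_assoc] using congrArg star hb_star
  exact hb.trans hpb.symm

theorem Finset.sum_mul_mul_eq_of_commute {ι R : Type*} [Semiring R] (s : Finset ι)
    (a b : ι → R) {p : R} (hcomm : ∀ i ∈ s, Commute (a i) p) (hsum : ∑ i ∈ s, b i * a i = 1) :
    ∑ i ∈ s, b i * (p * a i) = p := by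
  calc ∑ i ∈ s, b i * (p * a i) = ∑ i ∈ s, b i * a i * p :=
        Finset.sum_congr rfl fun i hi => by rw [mul_assoc, (hcomm i hi).eq]
    _ = p := by rw [← Finset.sum_mul, hsum, one_mul]

theorem subharmonic_projection_is_fixed_general {H : Type*} [NormedAddCommGroup H]
    [InnerProductSpace ℂ H] [CompleteSpace H] {I : Type*} [Fintype I]
    (a : I → (H →L[ℂ] H)) (hunital : ∑ i, adjoint (a i) ∘L a i = 1)
    (hselfadj : ∀ i, adjoint (a i) ∈ Submodule.span ℂ (Set.range a))
    (p : H →L[ℂ] H) (hsa : IsSelfAdjoint p)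
    (hcomm : ∀ i, a i ∘L p = p ∘L (a i ∘L p)) :
    (∀ i, a i ∘L p = p ∘L a i) ∧ (∑ i, adjoint (a i) ∘L p ∘L a i) = p := by
  have hspan : Submodule.span ℂ (Set.range a) ≤ invariantSubmodule ℂ p :=
    Submodule.span_le.mpr (Set.range_subset_iff.mpr hcomm)
  have hcommute : ∀ i, Commute (a i) p := fun i =>
    hsa.commute_of_mem_invariantSubmodule (hspan (Submodule.subset_span ⟨i, rfl⟩))
      (by rw [star_eq_adjoint]; exact hspan (hselfadj i))
  exact ⟨fun i => (hcommute i).eq,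
    Finset.univ.sum_mul_mul_eq_of_commute a (fun i => star (a i)) (fun i _ => hcommute i) hunital⟩

/-- if T(x) = Σᵢ aᵢ* x aᵢ is unital and the linear span of {aᵢ} is
self-adjoint, then a projection p with aᵢ p = p aᵢ p for all i commutes with every aᵢ
and is a fixed point: T(p) = p. -/
theorem subharmonic_projection_is_fixed {H : Type*} [NormedAddCommGroup H]
    [InnerProductSpace ℂ H] [CompleteSpace H] {I : Type*} [Fintype I]
    (a : I → (H →L[ℂ] H)) (hunital : ∑ i, adjoint (a i) ∘L a i = 1)
    (hselfadj : ∀ i, adjoint (a i) ∈ Submodule.span ℂ (Set.range a))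
    (p : H →L[ℂ] H) (hsa : IsSelfAdjoint p) (hidem : p ∘L p = p)
    (hcomm : ∀ i, a i ∘L p = p ∘L (a i ∘L p)) :
    (∀ i, a i ∘L p = p ∘L a i) ∧ (∑ i, adjoint (a i) ∘L p ∘L a i) = p :=
  subharmonic_projection_is_fixed_general a hunital hselfadj p hsa hcomm
end
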